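/- arXiv:1801.00696 — 6 statements merged into one kernel-verified Lean document; each statement's English description precedes it below -/
import Mathlib

section
/- Let d > 0, L := d/√2 and α ≥ 0. The equation α·sin(kL) + 2√2·k·cos(kL) = 0 has exactly one solution k in the interval [π/(2L), π/L), and it has no solution k in the interval (0, π/(2L)). Moreover, for α = 0 this solution equals π/(2L), and for α > 0 it lies in the open interval (π/(2L), π/L). -/
open Real Set

/-! Write `θ = kL`. On `(0, π/2)` both `α sin θ` and `c k cos θ` are positive, so there is no
root below `π/(2L)`. On `[π/2, π]` the sine decreases, while `k cos θ` strictly decreases because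
`cos θ ≤ 0` strictly decreases and `k > 0` increases; hence the left-hand side is strictly
decreasing on `[π/(2L), π/L]`, from the value `α ≥ 0` to `-cπ/L < 0`. By the intermediate value
theorem it has exactly one zero in `[π/(2L), π/L)`, and that zero is `π/(2L)` exactly when
`α = 0`. -/

theorem existsUnique_mem_Ico_eq_zero_of_strictAntiOn {f : ℝ → ℝ} {a b : ℝ} (hab : a ≤ b)
    (hf : ContinuousOn f (Icc a b)) (hanti : StrictAntiOn f (Icc a b)) (ha : 0 ≤ f a)
    (hb : f b < 0) : ∃! k, k ∈ Ico a b ∧ f k = 0 := by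
  obtain ⟨k, hk, hfk⟩ := intermediate_value_Icc' hab hf ⟨hb.le, ha⟩
  refine ⟨k, ⟨⟨hk.1, lt_of_le_of_ne hk.2 ?_⟩, hfk⟩, ?_⟩
  · rintro rfl
    linarith
  · rintro y ⟨hy, hfy⟩
    exact hanti.injOn (Ico_subset_Icc_self hy) hk (hfy.trans hfk.symm)

/-- With `c = 2√2`, the positive zeros of `robinDirichletSecular α c L` are the square roots of
the eigenvalues of the Robin–Dirichlet problem on `[0, L]`. -/
noncomputable def robinDirichletSecular (α c L k : ℝ) : ℝ := α * sin (k * L) + c * k * cos (k * L)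

section

variable {α c L k : ℝ}

theorem mul_mem_Ioo_zero_pi_div_two (hL : 0 < L) (hk : k ∈ Ioo 0 (π / (2 * L))) :
    k * L ∈ Ioo 0 (π / 2) := by
  rw [← div_div] at hk
  exact ⟨mul_pos hk.1 hL, (lt_div_iff₀ hL).1 hk.2⟩

theorem mul_mem_Icc_pi_div_two_pi (hL : 0 < L) (hk : k ∈ Icc (π / (2 * L)) (π / L)) :
    k * L ∈ Icc (π / 2) π := by
  rw [← div_div] at hk
  exact ⟨(div_le_iff₀ hL).1 hk.1, (le_div_iff₀ hL).1 hk.2⟩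

theorem continuous_robinDirichletSecular : Continuous (robinDirichletSecular α c L) := by
  unfold robinDirichletSecular
  fun_prop

theorem robinDirichletSecular_pi_div_two (hL : 0 < L) :
    robinDirichletSecular α c L (π / (2 * L)) = α := by
  have : π / (2 * L) * L = π / 2 := by field_simp
  simp [robinDirichletSecular, this]

theorem robinDirichletSecular_pi (hL : 0 < L) :
    robinDirichletSecular α c L (π / L) = -(c * (π / L)) := by
  have : π / L * L = π := by field_simp
  simp [robinDirichletSecular, this]

theorem robinDirichletSecular_pos (hL : 0 < L) (hα : 0 ≤ α) (hc : 0 < c)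
    (hk : k ∈ Ioo 0 (π / (2 * L))) : 0 < robinDirichletSecular α c L k := by
  obtain ⟨hθ₀, hθ₁⟩ := mul_mem_Ioo_zero_pi_div_two hL hk
  have hsin : 0 < sin (k * L) := sin_pos_of_pos_of_lt_pi hθ₀ (by linarith [pi_pos])
  have hcos : 0 < cos (k * L) := cos_pos_of_mem_Ioo ⟨by linarith, hθ₁⟩
  have hck : 0 < c * k := mul_pos hc hk.1
  unfold robinDirichletSecular
  positivity

theorem strictAntiOn_robinDirichletSecular (hL : 0 < L) (hα : 0 ≤ α) (hc : 0 < c) :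
    StrictAntiOn (robinDirichletSecular α c L) (Icc (π / (2 * L)) (π / L)) := by
  intro k₁ hk₁ k₂ hk₂ hlt
  obtain ⟨hθ₁, -⟩ := mul_mem_Icc_pi_div_two_pi hL hk₁
  obtain ⟨-, hθ₂⟩ := mul_mem_Icc_pi_div_two_pi hL hk₂
  have hθ : k₁ * L < k₂ * L := mul_lt_mul_of_pos_right hlt hL
  have hsin : sin (k₂ * L) ≤ sin (k₁ * L) := by
    rw [← sin_pi_sub, ← sin_pi_sub (k₁ * L)]
    apply sin_le_sin_of_le_of_le_pi_div_two <;> linarith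
  have hcos : cos (k₂ * L) < cos (k₁ * L) :=
    cos_lt_cos_of_nonneg_of_le_pi (by linarith [pi_pos]) hθ₂ hθ
  have hcos₂ : cos (k₂ * L) ≤ 0 := cos_nonpos_of_pi_div_two_le_of_le (by linarith) (by linarith)
  have hk₁ : 0 < k₁ := lt_of_lt_of_le (by positivity) hk₁.1
  calc α * sin (k₂ * L) + c * k₂ * cos (k₂ * L)
      ≤ α * sin (k₁ * L) + c * k₁ * cos (k₂ * L) := by
        gcongr ?_ + ?_
        · exact mul_le_mul_of_nonneg_left hsin hα
        · exact mul_le_mul_of_nonpos_right (by gcongr) hcos₂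
    _ < α * sin (k₁ * L) + c * k₁ * cos (k₁ * L) := by gcongr

end

/-- For `d > 0`, `L = d/√2`, `α ≥ 0`, the equation
`α sin(kL) + 2√2 k cos(kL) = 0` has exactly one solution in `[π/(2L), π/L)`, no
solution in `(0, π/(2L))`; for `α = 0` the solution is `π/(2L)`, and for `α > 0`
it lies in `(π/(2L), π/L)`. -/
theorem first_robin_dirichlet_root
    (d : ℝ) (hd : 0 < d) (L : ℝ) (hL : L = d / Real.sqrt 2)
    (α : ℝ) (hα : 0 ≤ α) :
    (∃! k : ℝ, k ∈ Set.Ico (π / (2 * L)) (π / L) ∧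
        α * Real.sin (k * L) + 2 * Real.sqrt 2 * k * Real.cos (k * L) = 0) ∧
    (∀ k ∈ Set.Ioo (0:ℝ) (π / (2 * L)),
        α * Real.sin (k * L) + 2 * Real.sqrt 2 * k * Real.cos (k * L) ≠ 0) ∧
    (α = 0 → ∀ k ∈ Set.Ico (π / (2 * L)) (π / L),
        α * Real.sin (k * L) + 2 * Real.sqrt 2 * k * Real.cos (k * L) = 0 →
        k = π / (2 * L)) ∧
    (0 < α → ∀ k ∈ Set.Ico (π / (2 * L)) (π / L),
        α * Real.sin (k * L) + 2 * Real.sqrt 2 * k * Real.cos (k * L) = 0 →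
        k ∈ Set.Ioo (π / (2 * L)) (π / L)) := by
  have hL₀ : 0 < L := by rw [hL]; positivity
  have hc : (0 : ℝ) < 2 * Real.sqrt 2 := by positivity
  have hab : π / (2 * L) < π / L := div_lt_div_of_pos_left pi_pos hL₀ (by linarith)
  have hroot : ∃! k, k ∈ Ico (π / (2 * L)) (π / L) ∧ robinDirichletSecular α (2 * √2) L k = 0 :=
    existsUnique_mem_Ico_eq_zero_of_strictAntiOn hab.le
      continuous_robinDirichletSecular.continuousOn
      (strictAntiOn_robinDirichletSecular hL₀ hα hc)
      (by rwa [robinDirichletSecular_pi_div_two hL₀])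
      (by rw [robinDirichletSecular_pi hL₀]; exact neg_neg_of_pos (by positivity))
  refine ⟨hroot, fun k hk ↦ (robinDirichletSecular_pos hL₀ hα hc hk).ne', ?_, ?_⟩
  · rintro rfl k hk hfk
    exact hroot.unique ⟨hk, hfk⟩
      ⟨left_mem_Ico.2 hab, robinDirichletSecular_pi_div_two hL₀⟩
  · intro hα₀ k hk hfk
    refine ⟨lt_of_le_of_ne hk.1 ?_, hk.2⟩
    rintro rfl
    rw [← robinDirichletSecular, robinDirichletSecular_pi_div_two hL₀] at hfk
    exact hα₀.ne' hfk
end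

section
/- Let d > 0, L := d/√2 and α > 0. For every n ∈ ℕ (n ≥ 0) the equation α·sin(kL) + 2√2·k·cos(kL) = 0 has exactly one solution k in the open interval ((n + 1/2)·π/L, (n + 1)·π/L), and every positive solution of this equation lies in one of these intervals. In particular, the n-th eigenvalue ε_n^D(α) of the Robin–Dirichlet Laplacian satisfies ((n + 1/2)·π/L)² < ε_n^D(α) < ((n + 1)·π/L)². -/
/-!
Put `t = xL`. A root of `α sin t + β x cos t` with `x > 0` and `α, β > 0` cannot have
`cos t = 0`, so it satisfies `tan t = -βx/α < 0`: `t` lies in the second half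
`((n + 1/2)π, (n + 1)π)` of a period of `tan`. On that half the secular function changes
sign between the endpoints (there it equals `±α` and `∓βx`), and any two roots `p < q`
would give `tan (pL) < tan (qL)` against `-βp/α > -βq/α`; so each half holds exactly one
root. Listing the roots by these intervals gives a strictly increasing enumeration of all
positive roots, which must then coincide with `k`.
-/

open Real Set

theorem Real.strictMonoOn_tan_Ioo_nat_mul_pi (m : ℕ) :
    StrictMonoOn tan (Ioo (m * π - π / 2) (m * π + π / 2)) := by
  intro x hx y hy hxy
  rw [← tan_sub_nat_mul_pi x m, ← tan_sub_nat_mul_pi y m]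
  exact strictMonoOn_tan ⟨by linarith [hx.1], by linarith [hx.2]⟩
    ⟨by linarith [hy.1], by linarith [hy.2]⟩ (by linarith)

theorem Real.exists_nat_mem_Ioo_of_sin_mul_cos_neg {t : ℝ} (ht : 0 < t)
    (h : sin t * cos t < 0) : ∃ n : ℕ, t ∈ Ioo ((n + 1 / 2) * π) ((n + 1) * π) := by
  set m := ⌊t / π⌋₊
  have hm : m * π ≤ t := (le_div_iff₀ pi_pos).1 (Nat.floor_le (by positivity))
  have hm' : t < (m + 1) * π := (div_lt_iff₀ pi_pos).1 (Nat.lt_floor_add_one _)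
  set s := t - m * π
  -- shifting by `mπ` multiplies both `sin` and `cos` by `(-1)^m`
  have hs : sin s * cos s < 0 := by
    have hsign : ((-1 : ℝ) ^ m) ^ 2 = 1 := by
      rcases neg_one_pow_eq_or ℝ m with h | h <;> simp [h]
    calc sin s * cos s = ((-1 : ℝ) ^ m) ^ 2 * (sin t * cos t) := by
          rw [sin_sub_nat_mul_pi, cos_sub_nat_mul_pi]; ring
      _ < 0 := by rwa [hsign, one_mul]
  have hsin : 0 ≤ sin s := sin_nonneg_of_nonneg_of_le_pi (by linarith) (by linarith)
  have hcos : cos s < 0 := by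
    by_contra! hc
    nlinarith [mul_nonneg hsin hc]
  have hs_gt : π / 2 < s := by
    by_contra! hle
    linarith [cos_nonneg_of_mem_Icc ⟨by linarith, hle⟩]
  exact ⟨m, by linarith, hm'⟩

namespace RobinDirichlet

/-- With `β = 2√2`, the left-hand side of the eigenvalue equation. -/
noncomputable def secular (α β L x : ℝ) : ℝ :=
  α * sin (x * L) + β * x * cos (x * L)

variable {α β L x : ℝ}

theorem continuous_secular : Continuous (secular α β L) := by
  unfold secular; fun_prop

theorem cos_ne_zero_of_secular_eq_zero (hα : α ≠ 0) (h : secular α β L x = 0) :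
    cos (x * L) ≠ 0 := by
  intro hcos
  have hsin : sin (x * L) = 0 := by
    simpa [secular, hcos, hα] using h
  simpa [hsin, hcos] using sin_sq_add_cos_sq (x * L)

theorem tan_eq_of_secular_eq_zero (hα : α ≠ 0) (h : secular α β L x = 0) :
    tan (x * L) = -(β * x) / α := by
  have hcos := cos_ne_zero_of_secular_eq_zero hα h
  rw [tan_eq_sin_div_cos, div_eq_div_iff hcos hα]
  unfold secular at h
  linear_combination h

theorem sin_mul_cos_neg_of_secular_eq_zero (hα : 0 < α) (hβ : 0 < β) (hx : 0 < x)
    (h : secular α β L x = 0) : sin (x * L) * cos (x * L) < 0 := by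
  have hcos := cos_ne_zero_of_secular_eq_zero hα.ne' h
  have hkey : α * (sin (x * L) * cos (x * L)) = -(β * x * cos (x * L) ^ 2) := by
    unfold secular at h
    linear_combination cos (x * L) * h
  have : 0 < β * x * cos (x * L) ^ 2 := by positivity
  nlinarith

theorem exists_nat_mem_Ioo_of_secular_eq_zero (hα : 0 < α) (hβ : 0 < β) (hL : 0 < L)
    (hx : 0 < x) (h : secular α β L x = 0) :
    ∃ n : ℕ, x ∈ Ioo ((n + 1 / 2) * π / L) ((n + 1) * π / L) := by
  obtain ⟨n, hn₁, hn₂⟩ := exists_nat_mem_Ioo_of_sin_mul_cos_neg (mul_pos hx hL)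
    (sin_mul_cos_neg_of_secular_eq_zero hα hβ hx h)
  exact ⟨n, (div_lt_iff₀ hL).2 hn₁, (lt_div_iff₀ hL).2 hn₂⟩

section Interval

variable (n : ℕ)

theorem secular_left_mul_secular_right (hL : 0 < L) :
    secular α β L ((n + 1 / 2) * π / L) * secular α β L ((n + 1) * π / L)
      = -(α * β * ((n + 1) * π / L)) := by
  have hcos : cos ((n + 1 / 2) * π) = 0 := by
    rw [show (n + 1 / 2) * π = π / 2 + n * π by ring, cos_add_nat_mul_pi, cos_pi_div_two,
      mul_zero]
  have hsin : sin ((n + 1 / 2) * π) ^ 2 = 1 := by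
    linear_combination sin_sq_add_cos_sq ((n + 1 / 2) * π) - cos ((n + 1 / 2) * π) * hcos
  have hshift : (n + 1) * π = (n + 1 / 2) * π + π / 2 := by ring
  simp only [secular, div_mul_cancel₀ _ hL.ne', hshift, sin_add_pi_div_two,
    cos_add_pi_div_two, hcos]
  linear_combination -(α * β * ((↑n + 1 / 2) * π + π / 2) / L) * hsin

theorem exists_secular_eq_zero_mem_Ioo (hα : 0 < α) (hβ : 0 < β) (hL : 0 < L) :
    ∃ x ∈ Ioo ((n + 1 / 2) * π / L) ((n + 1) * π / L), secular α β L x = 0 := by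
  set a := (n + 1 / 2) * π / L
  set b := (n + 1) * π / L
  have hab : a < b := div_lt_div_of_pos_right (by nlinarith [pi_pos]) hL
  have hprod : secular α β L a * secular α β L b < 0 := by
    rw [secular_left_mul_secular_right n hL]
    have : 0 < b := by positivity
    have : 0 < α * β * b := by positivity
    linarith
  have hzero : (0 : ℝ) ∈ uIcc (secular α β L a) (secular α β L b) := by
    rcases mul_neg_iff.1 hprod with h | h
    · exact mem_uIcc.2 (Or.inr ⟨h.2.le, h.1.le⟩)
    · exact mem_uIcc.2 (Or.inl ⟨h.1.le, h.2.le⟩)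
  obtain ⟨x, hx, hx0⟩ := intermediate_value_uIcc continuous_secular.continuousOn hzero
  rw [uIcc_of_le hab.le] at hx
  refine ⟨x, ⟨lt_of_le_of_ne hx.1 ?_, lt_of_le_of_ne hx.2 ?_⟩, hx0⟩ <;> rintro rfl <;>
    simp [hx0] at hprod

theorem secular_eq_zero_mem_Ioo_unique (hα : 0 < α) (hβ : 0 < β) (hL : 0 < L) {p q : ℝ}
    (hp : p ∈ Ioo ((n + 1 / 2) * π / L) ((n + 1) * π / L)) (hp0 : secular α β L p = 0)
    (hq : q ∈ Ioo ((n + 1 / 2) * π / L) ((n + 1) * π / L)) (hq0 : secular α β L q = 0) :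
    p = q := by
  have hI : ∀ y ∈ Ioo ((n + 1 / 2) * π / L) ((n + 1) * π / L),
      y * L ∈ Ioo (((n + 1 : ℕ) : ℝ) * π - π / 2) (((n + 1 : ℕ) : ℝ) * π + π / 2) := by
    rintro y ⟨hy₁, hy₂⟩
    rw [div_lt_iff₀ hL] at hy₁
    rw [lt_div_iff₀ hL] at hy₂
    push_cast
    constructor <;> nlinarith [pi_pos]
  have hmono : ∀ {y z}, y ∈ Ioo ((n + 1 / 2) * π / L) ((n + 1) * π / L) →
      secular α β L y = 0 → z ∈ Ioo ((n + 1 / 2) * π / L) ((n + 1) * π / L) →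
      secular α β L z = 0 → ¬ y < z := by
    intro y z hy hy0 hz hz0 hyz
    have htan := strictMonoOn_tan_Ioo_nat_mul_pi (n + 1) (hI y hy) (hI z hz)
      (mul_lt_mul_of_pos_right hyz hL)
    rw [tan_eq_of_secular_eq_zero hα.ne' hy0, tan_eq_of_secular_eq_zero hα.ne' hz0,
      div_lt_div_iff_of_pos_right hα, neg_lt_neg_iff] at htan
    exact (mul_lt_mul_of_pos_left hyz hβ).not_gt htan
  exact le_antisymm (not_lt.1 (hmono hq hq0 hp hp0)) (not_lt.1 (hmono hp hp0 hq hq0))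

theorem existsUnique_secular_eq_zero_mem_Ioo (hα : 0 < α) (hβ : 0 < β) (hL : 0 < L) :
    ∃! x, x ∈ Ioo ((n + 1 / 2) * π / L) ((n + 1) * π / L) ∧ secular α β L x = 0 := by
  obtain ⟨x, hx, hx0⟩ := exists_secular_eq_zero_mem_Ioo n hα hβ hL
  exact ⟨x, ⟨hx, hx0⟩, fun y ⟨hy, hy0⟩ =>
    secular_eq_zero_mem_Ioo_unique n hα hβ hL hy hy0 hx hx0⟩

end Interval

end RobinDirichlet

/-- For `α > 0` the equation `α sin(kL) + 2√2 k cos(kL) = 0` has exactly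
one solution in each interval `((n+1/2)π/L, (n+1)π/L)`, every positive solution lies in
one of these intervals, and consequently the eigenvalues `ε_n^D(α) = k_n²` (the `k_n`
being all positive solutions in increasing order) satisfy
`((n+1/2)π/L)² < ε_n^D(α) < ((n+1)π/L)²`. -/
theorem robin_dirichlet_roots_localization
    (d : ℝ) (hd : 0 < d) (L : ℝ) (hL : L = d / Real.sqrt 2)
    (α : ℝ) (hα : 0 < α)
    (k : ℕ → ℝ) (hkpos : ∀ n, 0 < k n) (hkmono : StrictMono k)
    (hkeq : ∀ n, α * Real.sin (k n * L) + 2 * Real.sqrt 2 * k n * Real.cos (k n * L) = 0)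
    (hkall : ∀ x : ℝ, 0 < x →
      α * Real.sin (x * L) + 2 * Real.sqrt 2 * x * Real.cos (x * L) = 0 → ∃ n, x = k n) :
    (∀ n : ℕ, ∃! x : ℝ, x ∈ Set.Ioo (((n : ℝ) + 1/2) * π / L) (((n : ℝ) + 1) * π / L) ∧
        α * Real.sin (x * L) + 2 * Real.sqrt 2 * x * Real.cos (x * L) = 0) ∧
    (∀ x : ℝ, 0 < x →
        α * Real.sin (x * L) + 2 * Real.sqrt 2 * x * Real.cos (x * L) = 0 →
        ∃ n : ℕ, x ∈ Set.Ioo (((n : ℝ) + 1/2) * π / L) (((n : ℝ) + 1) * π / L)) ∧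
    (∀ n : ℕ, (((n : ℝ) + 1/2) * π / L) ^ 2 < (k n) ^ 2 ∧
        (k n) ^ 2 < (((n : ℝ) + 1) * π / L) ^ 2) := by
  have hL0 : 0 < L := by rw [hL]; positivity
  have hβ : (0 : ℝ) < 2 * Real.sqrt 2 := by positivity
  have unique := fun n : ℕ => RobinDirichlet.existsUnique_secular_eq_zero_mem_Ioo n hα hβ hL0
  have locate := fun x (hx : 0 < x) => RobinDirichlet.exists_nat_mem_Ioo_of_secular_eq_zero hα hβ hL0 hx
  refine ⟨unique, locate, fun n => ?_⟩
  choose r hr hr0 using fun n => (unique n).exists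
  have hr_pos : ∀ n, 0 < r n := fun n => lt_trans (by positivity) (hr n).1
  have hr_mono : StrictMono r := strictMono_nat_of_lt_succ fun n => by
    have hgap : ((n : ℝ) + 1) * π / L < (((n + 1 : ℕ) : ℝ) + 1 / 2) * π / L := by
      push_cast
      exact div_lt_div_of_pos_right (by nlinarith [pi_pos]) hL0
    linarith [(hr n).2, (hr (n + 1)).1]
  have hrange : range r = range k := by
    ext x
    constructor
    · rintro ⟨m, rfl⟩
      exact (hkall _ (hr_pos m) (hr0 m)).imp fun _ => Eq.symm
    · rintro ⟨m, rfl⟩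
      obtain ⟨j, hj⟩ := locate _ (hkpos m) (hkeq m)
      exact ⟨j, (unique j).unique ⟨hr j, hr0 j⟩ ⟨hj, hkeq m⟩⟩
  obtain rfl : r = k := (hr_mono.range_inj hkmono).1 hrange
  have ha : 0 < ((n : ℝ) + 1 / 2) * π / L := by positivity
  exact ⟨pow_lt_pow_left₀ (hr n).1 ha.le two_ne_zero,
    pow_lt_pow_left₀ (hr n).2 (hr_pos n).le two_ne_zero⟩
end

section
/- Let d > 0 and Ω := {(x,y) ∈ ℝ² : x ≥ 0, y ≥ 0, |x−y| ≤ d}. There exists a constant c > 0 such that for every continuously differentiable function φ : ℝ² → ℂ with compact support, ∫₀^∞ |φ(x,x)|² dx ≤ c · ∫_Ω ( |φ(x,y)|² + ‖∇φ(x,y)‖² ) d(x,y). -/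
/-!
Restricting `φ` to the vertical segment `t ↦ (x, x + t)`, `0 ≤ t ≤ d`, which lies in `Ω`, the
fundamental theorem of calculus applied to `(1 - t/d) ‖φ(x, x + t)‖²` bounds `‖φ(x, x)‖²` by
`(1/d + 1) ∫₀^d (‖φ‖² + ‖∇φ‖²)(x, x + t) dt`. Integrating over `x ≥ 0`, the shear
`(x, t) ↦ (x, x + t)` preserves Lebesgue measure and maps `[0, ∞) × (0, d]` into `Ω`.
-/

open Real Set MeasureTheory

/-- The configuration domain `Ω = {(x,y) : x ≥ 0, y ≥ 0, |x - y| ≤ d}`. -/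
def pairDomain (d : ℝ) : Set (ℝ × ℝ) :=
  {p : ℝ × ℝ | 0 ≤ p.1 ∧ 0 ≤ p.2 ∧ |p.1 - p.2| ≤ d}

section Segment

variable {E : Type*} [NormedAddCommGroup E] [InnerProductSpace ℝ E]

theorem neg_mul_two_inner_le_sq_add_sq (u v : E) {c : ℝ} (hc0 : 0 ≤ c) (hc1 : c ≤ 1) :
    -(c * (2 * inner ℝ u v)) ≤ ‖u‖ ^ 2 + ‖v‖ ^ 2 := by
  have h1 : -inner ℝ u v ≤ ‖u‖ * ‖v‖ := (neg_le_abs _).trans (abs_real_inner_le_norm u v)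
  nlinarith [two_mul_le_add_sq ‖u‖ ‖v‖, mul_nonneg (norm_nonneg u) (norm_nonneg v)]

theorem sq_norm_le_intervalIntegral {g g' : ℝ → E} {d : ℝ} (hd : 0 < d)
    (hg : ∀ t ∈ Icc 0 d, HasDerivAt g (g' t) t) (hg' : ContinuousOn g' (Icc 0 d)) :
    ‖g 0‖ ^ 2 ≤ (1 / d + 1) * ∫ t in 0..d, (‖g t‖ ^ 2 + ‖g' t‖ ^ 2) := by
  set w' : ℝ → ℝ := fun t => -(1 / d) * ‖g t‖ ^ 2 + (1 - t / d) * (2 * inner ℝ (g t) (g' t))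
  have hw : ∀ t ∈ uIcc 0 d, HasDerivAt (fun t => (1 - t / d) * ‖g t‖ ^ 2) (w' t) t := by
    intro t ht
    rw [uIcc_of_le hd.le] at ht
    exact (((hasDerivAt_id t).div_const d).const_sub 1).mul (hg t ht).norm_sq
  have hgc : ContinuousOn g (Icc 0 d) := fun t ht => (hg t ht).continuousAt.continuousWithinAt
  have hw'c : ContinuousOn w' (Icc 0 d) := by fun_prop
  have hw'_integral : ∫ t in 0..d, w' t = -‖g 0‖ ^ 2 := by
    rw [intervalIntegral.integral_eq_sub_of_hasDerivAt hw (hw'c.intervalIntegrable_of_Icc hd.le),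
      div_self hd.ne']
    simp
  have hw'_le : ∀ t ∈ Icc 0 d, -w' t ≤ (1 / d + 1) * (‖g t‖ ^ 2 + ‖g' t‖ ^ 2) := by
    rintro t ⟨ht0, htd⟩
    have hc0 : 0 ≤ 1 - t / d := by rw [sub_nonneg, div_le_one hd]; exact htd
    have hc1 : 1 - t / d ≤ 1 := by linarith [div_nonneg ht0 hd.le]
    have := neg_mul_two_inner_le_sq_add_sq (g t) (g' t) hc0 hc1
    have : 0 ≤ 1 / d * ‖g' t‖ ^ 2 := by positivity
    simp only [w']
    linarith
  calc ‖g 0‖ ^ 2 = ∫ t in 0..d, -w' t := by rw [intervalIntegral.integral_neg, hw'_integral, neg_neg]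
    _ ≤ ∫ t in 0..d, (1 / d + 1) * (‖g t‖ ^ 2 + ‖g' t‖ ^ 2) :=
      intervalIntegral.integral_mono_on hd.le (hw'c.neg.intervalIntegrable_of_Icc hd.le)
        (ContinuousOn.intervalIntegrable_of_Icc hd.le (by fun_prop)) hw'_le
    _ = (1 / d + 1) * ∫ t in 0..d, (‖g t‖ ^ 2 + ‖g' t‖ ^ 2) :=
      intervalIntegral.integral_const_mul _ _

theorem sq_norm_apply_diag_le {φ : ℝ × ℝ → E} (hφ : ContDiff ℝ 1 φ) {d : ℝ} (hd : 0 < d)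
    (x : ℝ) :
    ‖φ (x, x)‖ ^ 2 ≤
      (1 / d + 1) * ∫ t in Ioc 0 d, (‖φ (x, x + t)‖ ^ 2 + ‖fderiv ℝ φ (x, x + t)‖ ^ 2) := by
  have hline : ∀ t, HasDerivAt (fun t => φ (x, x + t)) (fderiv ℝ φ (x, x + t) (0, 1)) t :=
    fun t => (hφ.differentiable one_ne_zero _).hasFDerivAt.comp_hasDerivAt t
      ((hasDerivAt_const t x).prodMk ((hasDerivAt_id t).const_add x))
  have hDφ := hφ.continuous_fderiv one_ne_zero
  have hdir : ∀ t, ‖fderiv ℝ φ (x, x + t) (0, 1)‖ ≤ ‖fderiv ℝ φ (x, x + t)‖ := fun t => by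
    simpa using (fderiv ℝ φ (x, x + t)).le_opNorm ((0 : ℝ), (1 : ℝ))
  have hsegment := sq_norm_le_intervalIntegral hd (fun t _ => hline t) (by fun_prop)
  rw [add_zero] at hsegment
  rw [← intervalIntegral.integral_of_le hd.le]
  refine hsegment.trans ?_
  gcongr
  refine intervalIntegral.integral_mono_on hd.le ?_ ?_ fun t _ => ?_
  · exact Continuous.intervalIntegrable (by fun_prop) _ _
  · exact Continuous.intervalIntegrable (by fun_prop) _ _
  · gcongr
    exact hdir t

end Segment

section Shear

variable {E : Type*} [NormedAddCommGroup E]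

theorem MeasureTheory.Integrable.comp_shear {F : ℝ × ℝ → E} (hF : Integrable F) :
    Integrable (fun z : ℝ × ℝ => F (z.1, z.1 + z.2)) :=
  ((measurePreserving_prod_add volume volume).integrable_comp_emb
    (MeasurableEquiv.shearAddRight ℝ).measurableEmbedding).2 hF

theorem MeasureTheory.Integrable.integral_shear [NormedSpace ℝ E] {F : ℝ × ℝ → E}
    (hF : Integrable F) (s : Set ℝ) :
    Integrable (fun x => ∫ t in s, F (x, x + t)) := by
  have := hF.comp_shear.integrableOn (s := univ ×ˢ s)
  rw [IntegrableOn, Measure.volume_eq_prod, ← Measure.prod_restrict, Measure.restrict_univ] at this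
  exact this.integral_prod_left

theorem setIntegral_Ici_Ioc_shear_le_setIntegral_pairDomain {F : ℝ × ℝ → ℝ} (hF : Integrable F)
    (hF0 : ∀ p, 0 ≤ F p) (d : ℝ) :
    ∫ x in Ici 0, ∫ t in Ioc 0 d, F (x, x + t) ≤ ∫ p in pairDomain d, F p := by
  have hsub : Ici 0 ×ˢ Ioc 0 d ⊆ (fun z : ℝ × ℝ => (z.1, z.1 + z.2)) ⁻¹' pairDomain d := by
    rintro ⟨x, t⟩ ⟨hx, ht0, htd⟩
    refine ⟨hx, show 0 ≤ x + t by linarith [mem_Ici.1 hx], ?_⟩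
    simpa only [sub_add_cancel_left, abs_neg, abs_of_pos ht0] using htd
  calc ∫ x in Ici 0, ∫ t in Ioc 0 d, F (x, x + t)
      = ∫ z in Ici 0 ×ˢ Ioc 0 d, F (z.1, z.1 + z.2) :=
        (setIntegral_prod (fun z : ℝ × ℝ => F (z.1, z.1 + z.2)) hF.comp_shear.integrableOn).symm
    _ ≤ ∫ z in (fun z : ℝ × ℝ => (z.1, z.1 + z.2)) ⁻¹' pairDomain d, F (z.1, z.1 + z.2) :=
        setIntegral_mono_set hF.comp_shear.integrableOn (.of_forall fun z => hF0 _)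
          hsub.eventuallyLE
    _ = ∫ p in pairDomain d, F p :=
        (measurePreserving_prod_add volume volume).setIntegral_preimage_emb
          (MeasurableEquiv.shearAddRight ℝ).measurableEmbedding _ _

end Shear

/-- trace estimate along the diagonal. There is a constant `c > 0` such
that for every `C¹` compactly supported `φ : ℝ² → ℂ`,
`∫₀^∞ |φ(x,x)|² dx ≤ c ∫_Ω (|φ|² + ‖∇φ‖²)`. -/
theorem diagonal_trace_estimate (d : ℝ) (hd : 0 < d) :
    ∃ c : ℝ, 0 < c ∧
      ∀ φ : ℝ × ℝ → ℂ, ContDiff ℝ 1 φ → HasCompactSupport φ →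
        ∫ x in Set.Ici (0:ℝ), ‖φ (x, x)‖ ^ 2 ≤
          c * ∫ p in pairDomain d, (‖φ p‖ ^ 2 + ‖fderiv ℝ φ p‖ ^ 2) := by
  refine ⟨1 / d + 1, by positivity, fun φ hφ hsupp => ?_⟩
  set F : ℝ × ℝ → ℝ := fun p => ‖φ p‖ ^ 2 + ‖fderiv ℝ φ p‖ ^ 2
  have hF : Integrable F := by
    have hφc := hφ.continuous
    have hDφ := hφ.continuous_fderiv one_ne_zero
    refine Continuous.integrable_of_hasCompactSupport (by fun_prop) (.add ?_ ?_)
    · exact hsupp.comp_left (g := fun z : ℂ => ‖z‖ ^ 2) (by simp)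
    · exact (hsupp.fderiv ℝ).comp_left (g := fun L : ℝ × ℝ →L[ℝ] ℂ => ‖L‖ ^ 2) (by simp)
  calc ∫ x in Ici 0, ‖φ (x, x)‖ ^ 2
      ≤ ∫ x in Ici 0, (1 / d + 1) * ∫ t in Ioc 0 d, F (x, x + t) :=
        integral_mono_of_nonneg (.of_forall fun x => by positivity)
          ((hF.integral_shear _).integrableOn.const_mul _)
          (.of_forall fun x => sq_norm_apply_diag_le hφ hd x)
    _ = (1 / d + 1) * ∫ x in Ici 0, ∫ t in Ioc 0 d, F (x, x + t) := integral_const_mul _ _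
    _ ≤ (1 / d + 1) * ∫ p in pairDomain d, F p := by
        gcongr
        exact setIntegral_Ici_Ioc_shear_le_setIntegral_pairDomain hF (fun p => by positivity) d
end

section
/- Let β > 0, E ∈ ℝ and μ < E. Then lim_{L→∞} (1/L)·Σ_{m=1}^∞ 1/(e^{β(E + (mπ/L)² − μ)} − 1) = (1/π)·∫₀^∞ 1/(e^{β(E + x² − μ)} − 1) dx, where L ranges over the positive reals. -/
/-!
Put `f x = (exp (β (E + x² - μ)) - 1)⁻¹`, which is positive, antitone on `[0, ∞)` and dominated
by a Gaussian. For a positive step `h`, comparing the sum of an antitone function with its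
integral on unit intervals and rescaling by `h` gives
`∫₀^∞ f - h f(0) ≤ h ∑_{m ≥ 1} f(m h) ≤ ∫₀^∞ f`, so the Riemann sums converge to the integral
as `h → 0⁺`. The theorem is the case `h = π / L`.
-/

open Real Set Filter MeasureTheory Topology

theorem mul_integral_comp_mul_left_Ioi_zero (f : ℝ → ℝ) {h : ℝ} (hh : 0 < h) :
    h * ∫ x in Ioi 0, f (h * x) = ∫ x in Ioi 0, f x := by
  simpa using integral_comp_mul_left_Ioi' f 0 hh

theorem MeasureTheory.IntegrableOn.comp_mul_left_Ioi_zero {f : ℝ → ℝ} {h : ℝ}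
    (integrable : IntegrableOn f (Ioi 0)) (hh : 0 < h) :
    IntegrableOn (fun x => f (h * x)) (Ioi 0) :=
  (integrableOn_Ioi_comp_mul_left_iff f 0 hh).2 (by rwa [mul_zero])

namespace AntitoneOn

variable {f : ℝ → ℝ} {h : ℝ}

theorem comp_mul_left (anti : AntitoneOn f (Ici 0)) (hh : 0 ≤ h) :
    AntitoneOn (fun x => f (h * x)) (Ici 0) := fun _ hx _ hy hxy =>
  anti (mul_nonneg hh hx) (mul_nonneg hh hy) (mul_le_mul_of_nonneg_left hxy hh)

theorem mul_tsum_le_integral (anti : AntitoneOn f (Ici 0)) (integrable : IntegrableOn f (Ioi 0))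
    (nonneg : ∀ t ∈ Ioi 0, 0 ≤ f t) (hh : 0 < h) :
    h * ∑' n : ℕ, f (h * (n + 1)) ≤ ∫ x in Ioi 0, f x := by
  have hle := (anti.comp_mul_left hh.le).tsum_add_one_le_integral
    (integrable.comp_mul_left_Ioi_zero hh) fun t ht => nonneg _ (mul_pos hh ht)
  push_cast at hle
  calc h * ∑' n : ℕ, f (h * (n + 1)) ≤ h * ∫ x in Ioi 0, f (h * x) := by gcongr
    _ = ∫ x in Ioi 0, f x := mul_integral_comp_mul_left_Ioi_zero f hh

theorem integral_sub_le_mul_tsum (anti : AntitoneOn f (Ici 0))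
    (integrable : IntegrableOn f (Ioi 0)) (nonneg : ∀ t ∈ Ioi 0, 0 ≤ f t) (hh : 0 < h) :
    (∫ x in Ioi 0, f x) - h * f 0 ≤ h * ∑' n : ℕ, f (h * (n + 1)) := by
  have hnonneg : ∀ t ∈ Ioi 0, 0 ≤ f (h * t) := fun t ht => nonneg _ (mul_pos hh ht)
  have hsum := (anti.comp_mul_left hh.le).summable_of_integrableOn_Ioi_zero
    (integrable.comp_mul_left_Ioi_zero hh) hnonneg
  have hle := (anti.comp_mul_left hh.le).integral_le_tsum hsum hnonneg
  rw [hsum.tsum_eq_zero_add] at hle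
  simp only [Nat.cast_add, Nat.cast_one, Nat.cast_zero, mul_zero] at hle
  calc (∫ x in Ioi 0, f x) - h * f 0 = h * ((∫ x in Ioi 0, f (h * x)) - f 0) := by
        rw [mul_sub, mul_integral_comp_mul_left_Ioi_zero f hh]
    _ ≤ h * ∑' n : ℕ, f (h * (n + 1)) := by
        gcongr
        linarith

theorem tendsto_mul_tsum_nhdsGT_zero (anti : AntitoneOn f (Ici 0))
    (integrable : IntegrableOn f (Ioi 0)) (nonneg : ∀ t ∈ Ioi 0, 0 ≤ f t) :
    Tendsto (fun h => h * ∑' n : ℕ, f (h * (n + 1))) (𝓝[>] 0) (𝓝 (∫ x in Ioi 0, f x)) := by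
  have hlower : Tendsto (fun h => (∫ x in Ioi 0, f x) - h * f 0) (𝓝[>] 0)
      (𝓝 (∫ x in Ioi 0, f x)) := by
    simpa using (tendsto_const_nhds.sub (tendsto_nhdsWithin_of_tendsto_nhds
      (continuous_id.mul continuous_const).continuousAt) : Tendsto _ (𝓝[>] (0 : ℝ)) _)
  refine tendsto_of_tendsto_of_tendsto_of_le_of_le' hlower tendsto_const_nhds ?_ ?_ <;>
    filter_upwards [self_mem_nhdsWithin] with h hh
  · exact anti.integral_sub_le_mul_tsum integrable nonneg hh
  · exact anti.mul_tsum_le_integral integrable nonneg hh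

end AntitoneOn

section BoseEinstein

variable {β E μ : ℝ}

theorem bose_denom_pos (hβ : 0 < β) (hμ : μ < E) (x : ℝ) :
    0 < exp (β * (E + x ^ 2 - μ)) - 1 := by
  have : 0 < β * (E + x ^ 2 - μ) := mul_pos hβ (by nlinarith [sq_nonneg x])
  linarith [one_lt_exp_iff.2 this]

theorem bose_antitoneOn (hβ : 0 < β) (hμ : μ < E) :
    AntitoneOn (fun x => (exp (β * (E + x ^ 2 - μ)) - 1)⁻¹) (Ici 0) := by
  intro x hx y _ hxy
  have hsq : x ^ 2 ≤ y ^ 2 := pow_le_pow_left₀ hx hxy 2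
  have : exp (β * (E + x ^ 2 - μ)) ≤ exp (β * (E + y ^ 2 - μ)) :=
    exp_le_exp.2 (by gcongr)
  exact inv_anti₀ (bose_denom_pos hβ hμ x) (by linarith)

theorem bose_le_gaussian (hβ : 0 < β) (hμ : μ < E) (x : ℝ) :
    (exp (β * (E + x ^ 2 - μ)) - 1)⁻¹ ≤ (exp (β * (E - μ)) - 1)⁻¹ * exp (-β * x ^ 2) := by
  have hsplit : exp (β * (E + x ^ 2 - μ)) = exp (β * (E - μ)) * exp (β * x ^ 2) := by
    rw [← exp_add]; ring_nf
  have hgauss : 1 ≤ exp (β * x ^ 2) := one_le_exp (by positivity)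
  have hc := bose_denom_pos hβ hμ 0
  rw [zero_pow two_ne_zero, add_zero] at hc
  calc (exp (β * (E + x ^ 2 - μ)) - 1)⁻¹
      ≤ ((exp (β * (E - μ)) - 1) * exp (β * x ^ 2))⁻¹ :=
        inv_anti₀ (by positivity) (by rw [hsplit]; nlinarith)
    _ = (exp (β * (E - μ)) - 1)⁻¹ * exp (-β * x ^ 2) := by
        rw [mul_inv, ← exp_neg, neg_mul]

theorem bose_integrable (hβ : 0 < β) (hμ : μ < E) :
    Integrable (fun x => (exp (β * (E + x ^ 2 - μ)) - 1)⁻¹) := by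
  refine ((integrable_exp_neg_mul_sq hβ).const_mul (exp (β * (E - μ)) - 1)⁻¹).mono' ?_ ?_
  · exact (Continuous.inv₀ (by fun_prop) fun x =>
      (bose_denom_pos hβ hμ x).ne').aestronglyMeasurable
  · filter_upwards with x
    rw [norm_of_nonneg (inv_pos.2 (bose_denom_pos hβ hμ x)).le]
    exact bose_le_gaussian hβ hμ x

end BoseEinstein

/-- for `β > 0`, `E ∈ ℝ`, `μ < E`,
`(1/L) Σ_{m≥1} 1/(e^{β(E + (mπ/L)² - μ)} - 1) → (1/π) ∫₀^∞ 1/(e^{β(E + x² - μ)} - 1) dx`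
as `L → ∞` (the sum over `m ≥ 1` is encoded as a sum over `m : ℕ` of `m + 1`). -/
theorem riemann_sum_thermodynamic_limit
    (β E μ : ℝ) (hβ : 0 < β) (hμ : μ < E) :
    Filter.Tendsto
      (fun L : ℝ => (1 / L) *
        ∑' m : ℕ, (Real.exp (β * (E + (((m : ℝ) + 1) * π / L) ^ 2 - μ)) - 1)⁻¹)
      Filter.atTop
      (nhds ((1 / π) *
        ∫ x in Set.Ioi (0:ℝ), (Real.exp (β * (E + x ^ 2 - μ)) - 1)⁻¹)) := by
  have hriemann := (bose_antitoneOn hβ hμ).tendsto_mul_tsum_nhdsGT_zero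
    (bose_integrable hβ hμ).integrableOn fun x _ => (inv_pos.2 (bose_denom_pos hβ hμ x)).le
  have hstep : Tendsto (fun L => π / L) atTop (𝓝[>] 0) :=
    tendsto_nhdsWithin_iff.2 ⟨tendsto_const_nhds.div_atTop tendsto_id,
      (eventually_gt_atTop 0).mono fun _ hL => div_pos pi_pos hL⟩
  refine ((hriemann.comp hstep).const_mul (1 / π)).congr fun L => ?_
  simp only [Function.comp_apply, ← mul_assoc]
  congr 1
  · field_simp
  · congr! 6
    ring
end

section
/- Let ℓ > 0, β > 0 and μ < π²/(4ℓ²). Setting ε_n := ((n + 1/2)·π/ℓ)² for n ∈ ℕ, one has lim_{L→∞} (1/L)·Σ_{n=0}^∞ Σ_{m=1}^∞ 1/(e^{β(ε_n + (mπ/L)² − μ)} − 1) = (1/π)·Σ_{n=0}^∞ ∫₀^∞ 1/(e^{β·ε_n}·e^{β(x² − μ)} − 1) dx, where L ranges over the positive reals and both sides are finite. -/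
/-!
For a fixed transverse mode `n`, `(π / L) Σ_{m ≥ 1} f_n (m π / L)` is a right Riemann sum, with
mesh `π / L`, of the decreasing integrable function `f_n x = 1 / (e^{β (ε_n + x² - μ)} - 1)`; the
integral test squeezes it between `∫₀^∞ f_n - (π / L) f_n 0` and `∫₀^∞ f_n`. Since `μ < ε_0`,
`f_n x ≤ C e^{-β ε_n} e^{-β x²}`, so both `f_n 0` and `∫₀^∞ f_n` are summable in `n`. Summing the
two bounds over `n` and letting `L → ∞` gives the limit.
-/

open Real Set Filter MeasureTheory Topology

theorem integrableOn_Ioi_zero_comp_mul_right {f : ℝ → ℝ} {d : ℝ}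
    (integrable : IntegrableOn f (Ioi 0)) (hd : 0 < d) :
    IntegrableOn (fun t => f (t * d)) (Ioi 0) :=
  (integrableOn_Ioi_comp_mul_right_iff f 0 hd).2 (by rwa [zero_mul])

namespace AntitoneOn

variable {f : ℝ → ℝ} {d : ℝ}

theorem comp_mul_right_of_pos (anti : AntitoneOn f (Ici 0)) (hd : 0 < d) :
    AntitoneOn (fun t => f (t * d)) (Ici 0) := fun _ ha _ hb hab =>
  anti (mul_nonneg ha hd.le) (mul_nonneg hb hd.le) (mul_le_mul_of_nonneg_right hab hd.le)

theorem summable_comp_mul (anti : AntitoneOn f (Ici 0))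
    (integrable : IntegrableOn f (Ioi 0)) (nonneg : ∀ t ∈ Ioi 0, 0 ≤ f t) (hd : 0 < d) :
    Summable fun m : ℕ => f (m * d) :=
  (anti.comp_mul_right_of_pos hd).summable_of_integrableOn_Ioi_zero
    (integrableOn_Ioi_zero_comp_mul_right integrable hd) fun _ ht => nonneg _ (mul_pos ht hd)

theorem summable_comp_add_one_mul (anti : AntitoneOn f (Ici 0))
    (integrable : IntegrableOn f (Ioi 0)) (nonneg : ∀ t ∈ Ioi 0, 0 ≤ f t) (hd : 0 < d) :
    Summable fun m : ℕ => f ((m + 1) * d) := by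
  exact_mod_cast (summable_nat_add_iff 1).2 (anti.summable_comp_mul integrable nonneg hd)

theorem mul_tsum_comp_add_one_mul_le_integral (anti : AntitoneOn f (Ici 0))
    (integrable : IntegrableOn f (Ioi 0)) (nonneg : ∀ t ∈ Ioi 0, 0 ≤ f t) (hd : 0 < d) :
    d * ∑' m : ℕ, f ((m + 1) * d) ≤ ∫ x in Ioi 0, f x := by
  have := (anti.comp_mul_right_of_pos hd).tsum_add_one_le_integral
    (integrableOn_Ioi_zero_comp_mul_right integrable hd) fun _ ht => nonneg _ (mul_pos ht hd)
  rw [integral_comp_mul_right_Ioi f 0 hd, zero_mul, smul_eq_mul] at this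
  push_cast at this
  rwa [← le_inv_mul_iff₀ hd]

theorem integral_le_mul_add_tsum_comp_add_one_mul (anti : AntitoneOn f (Ici 0))
    (integrable : IntegrableOn f (Ioi 0)) (nonneg : ∀ t ∈ Ioi 0, 0 ≤ f t) (hd : 0 < d) :
    ∫ x in Ioi 0, f x ≤ d * (f 0 + ∑' m : ℕ, f ((m + 1) * d)) := by
  have hs := anti.summable_comp_mul integrable nonneg hd
  have := (anti.comp_mul_right_of_pos hd).integral_le_tsum hs
    fun _ ht => nonneg _ (mul_pos ht hd)
  rw [integral_comp_mul_right_Ioi f 0 hd, smul_eq_mul, hs.tsum_eq_zero_add] at this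
  push_cast at this
  simp only [zero_mul] at this
  rwa [← inv_mul_le_iff₀ hd]

end AntitoneOn

section RiemannSumFamily

variable {f : ℕ → ℝ → ℝ} {d : ℝ}

theorem summable_prod_comp_add_one_mul (anti : ∀ n, AntitoneOn (f n) (Ici 0))
    (integrable : ∀ n, IntegrableOn (f n) (Ioi 0)) (nonneg : ∀ n, ∀ t ∈ Ioi 0, 0 ≤ f n t)
    (summable_integral : Summable fun n => ∫ x in Ioi 0, f n x) (hd : 0 < d) :
    Summable fun nm : ℕ × ℕ => f nm.1 ((nm.2 + 1) * d) := by
  have nonneg' (n m : ℕ) : 0 ≤ f n ((m + 1) * d) := nonneg n _ (mem_Ioi.2 (by positivity))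
  refine (summable_prod_of_nonneg fun nm => nonneg' nm.1 nm.2).2
    ⟨fun n => (anti n).summable_comp_add_one_mul (integrable n) (nonneg n) hd, ?_⟩
  refine (summable_integral.mul_left d⁻¹).of_nonneg_of_le
    (fun n => tsum_nonneg (nonneg' n)) fun n => ?_
  rw [le_inv_mul_iff₀ hd]
  exact (anti n).mul_tsum_comp_add_one_mul_le_integral (integrable n) (nonneg n) hd

theorem mul_tsum_prod_comp_add_one_mul_le_tsum_integral
    (anti : ∀ n, AntitoneOn (f n) (Ici 0))
    (integrable : ∀ n, IntegrableOn (f n) (Ioi 0)) (nonneg : ∀ n, ∀ t ∈ Ioi 0, 0 ≤ f n t)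
    (summable_integral : Summable fun n => ∫ x in Ioi 0, f n x) (hd : 0 < d) :
    d * ∑' nm : ℕ × ℕ, f nm.1 ((nm.2 + 1) * d) ≤ ∑' n, ∫ x in Ioi 0, f n x := by
  have hs := summable_prod_comp_add_one_mul anti integrable nonneg summable_integral hd
  rw [hs.tsum_prod, ← tsum_mul_left]
  exact (hs.prod.mul_left d).tsum_le_tsum
    (fun n => (anti n).mul_tsum_comp_add_one_mul_le_integral (integrable n) (nonneg n) hd)
    summable_integral

theorem tsum_integral_sub_le_mul_tsum_prod_comp_add_one_mul
    (anti : ∀ n, AntitoneOn (f n) (Ici 0))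
    (integrable : ∀ n, IntegrableOn (f n) (Ioi 0)) (nonneg : ∀ n, ∀ t ∈ Ioi 0, 0 ≤ f n t)
    (summable_integral : Summable fun n => ∫ x in Ioi 0, f n x)
    (summable_zero : Summable fun n => f n 0) (hd : 0 < d) :
    (∑' n, ∫ x in Ioi 0, f n x) - d * ∑' n, f n 0 ≤
      d * ∑' nm : ℕ × ℕ, f nm.1 ((nm.2 + 1) * d) := by
  have hs := summable_prod_comp_add_one_mul anti integrable nonneg summable_integral hd
  rw [hs.tsum_prod, sub_le_iff_le_add', ← mul_add, ← summable_zero.tsum_add hs.prod,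
    ← tsum_mul_left]
  exact summable_integral.tsum_le_tsum
    (fun n => (anti n).integral_le_mul_add_tsum_comp_add_one_mul (integrable n) (nonneg n) hd)
    ((summable_zero.add hs.prod).mul_left d)

theorem tendsto_mul_tsum_prod_comp_add_one_mul (anti : ∀ n, AntitoneOn (f n) (Ici 0))
    (integrable : ∀ n, IntegrableOn (f n) (Ioi 0)) (nonneg : ∀ n, ∀ t ∈ Ioi 0, 0 ≤ f n t)
    (summable_integral : Summable fun n => ∫ x in Ioi 0, f n x)
    (summable_zero : Summable fun n => f n 0) :
    Tendsto (fun d => d * ∑' nm : ℕ × ℕ, f nm.1 ((nm.2 + 1) * d)) (𝓝[>] 0)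
      (𝓝 (∑' n, ∫ x in Ioi 0, f n x)) := by
  have lower : Tendsto (fun d => (∑' n, ∫ x in Ioi 0, f n x) - d * ∑' n, f n 0) (𝓝[>] 0)
      (𝓝 (∑' n, ∫ x in Ioi 0, f n x)) := by
    simpa using (tendsto_const_nhds.sub (tendsto_id.mul_const (∑' n, f n 0))).mono_left
      (nhdsWithin_le_nhds (s := Ioi (0 : ℝ)) (a := 0))
  refine tendsto_of_tendsto_of_tendsto_of_le_of_le' lower tendsto_const_nhds ?_ ?_ <;>
    filter_upwards [self_mem_nhdsWithin] with d hd
  · exact tsum_integral_sub_le_mul_tsum_prod_comp_add_one_mul anti integrable nonneg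
      summable_integral summable_zero hd
  · exact mul_tsum_prod_comp_add_one_mul_le_tsum_integral anti integrable nonneg
      summable_integral hd

end RiemannSumFamily

theorem summable_integral_of_le_mul {α : Type*} [MeasurableSpace α] {ν : Measure α}
    {f : ℕ → α → ℝ} {a : ℕ → ℝ} {g : α → ℝ} (hf : ∀ n, Integrable (f n) ν)
    (nonneg : ∀ n x, 0 ≤ f n x) (hle : ∀ n x, f n x ≤ a n * g x) (ha : Summable a)
    (hg : Integrable g ν) : Summable fun n => ∫ x, f n x ∂ν :=
  (ha.mul_right (∫ x, g x ∂ν)).of_nonneg_of_le (fun n => integral_nonneg (nonneg n)) fun n =>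
    (integral_mono (hf n) (hg.const_mul (a n)) (hle n)).trans_eq (integral_const_mul _ _)

theorem inv_exp_sub_one_le {δ y : ℝ} (hδ : 0 < δ) (hy : δ ≤ y) :
    (exp y - 1)⁻¹ ≤ (1 - exp (-δ))⁻¹ * exp (-y) := by
  have hδ' : 0 < 1 - exp (-δ) := sub_pos.2 (exp_lt_one_iff.2 (neg_neg_of_pos hδ))
  rw [exp_neg y, ← mul_inv]
  refine inv_anti₀ (mul_pos hδ' (exp_pos y)) ?_
  have : 1 ≤ exp (-δ) * exp y := by rw [← exp_add]; exact one_le_exp (by linarith)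
  linarith

/-- Bose–Einstein occupation of the pair state with transverse energy `e` and longitudinal
momentum `x`. -/
noncomputable def boseOccupation (β μ e x : ℝ) : ℝ := (exp (β * (e + x ^ 2 - μ)) - 1)⁻¹

section BoseOccupation

variable {β μ e : ℝ}

theorem one_lt_exp_mul_add_sq_sub (hβ : 0 < β) (he : μ < e) (x : ℝ) :
    1 < exp (β * (e + x ^ 2 - μ)) :=
  one_lt_exp_iff.2 (mul_pos hβ (by nlinarith [sq_nonneg x]))

theorem boseOccupation_pos (hβ : 0 < β) (he : μ < e) (x : ℝ) : 0 < boseOccupation β μ e x :=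
  inv_pos.2 (sub_pos.2 (one_lt_exp_mul_add_sq_sub hβ he x))

theorem antitoneOn_boseOccupation (hβ : 0 < β) (he : μ < e) :
    AntitoneOn (boseOccupation β μ e) (Ici 0) := fun x hx _ _ hxy => by
  refine inv_anti₀ (sub_pos.2 (one_lt_exp_mul_add_sq_sub hβ he x)) (sub_le_sub_right ?_ 1)
  gcongr

theorem continuous_boseOccupation (hβ : 0 < β) (he : μ < e) :
    Continuous (boseOccupation β μ e) :=
  (by fun_prop : Continuous fun x => exp (β * (e + x ^ 2 - μ)) - 1).inv₀ fun x =>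
    (sub_pos.2 (one_lt_exp_mul_add_sq_sub hβ he x)).ne'

theorem boseOccupation_le {e₀ : ℝ} (hβ : 0 < β) (hμ : μ < e₀) (he : e₀ ≤ e) (x : ℝ) :
    boseOccupation β μ e x ≤
      (1 - exp (-(β * (e₀ - μ))))⁻¹ * exp (β * μ) * exp (-β * e) * exp (-β * x ^ 2) := by
  refine (inv_exp_sub_one_le (mul_pos hβ (sub_pos.2 hμ)) ?_).trans_eq ?_
  · nlinarith [sq_nonneg x]
  · rw [mul_assoc _ (exp (β * μ)), mul_assoc, mul_assoc, ← exp_add, ← exp_add]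
    ring_nf

theorem integrable_boseOccupation (hβ : 0 < β) (he : μ < e) :
    Integrable (boseOccupation β μ e) := by
  refine ((integrable_exp_neg_mul_sq hβ).const_mul
    ((1 - exp (-(β * (e - μ))))⁻¹ * exp (β * μ) * exp (-β * e))).mono'
    (continuous_boseOccupation hβ he).aestronglyMeasurable (ae_of_all _ fun x => ?_)
  rw [norm_of_nonneg (boseOccupation_pos hβ he x).le]
  exact boseOccupation_le hβ he le_rfl x

end BoseOccupation

noncomputable def transverseEnergy (ℓ : ℝ) (n : ℕ) : ℝ := (((n : ℝ) + 1 / 2) * π / ℓ) ^ 2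

theorem transverseEnergy_eq (ℓ : ℝ) (n : ℕ) :
    transverseEnergy ℓ n = (π / ℓ) ^ 2 * ((n : ℝ) + 1 / 2) ^ 2 := by
  rw [transverseEnergy]; ring

theorem transverseEnergy_zero (ℓ : ℝ) : transverseEnergy ℓ 0 = π ^ 2 / (4 * ℓ ^ 2) := by
  rw [transverseEnergy]; ring

theorem monotone_transverseEnergy (ℓ : ℝ) : Monotone (transverseEnergy ℓ) := fun m n hmn => by
  rw [transverseEnergy_eq, transverseEnergy_eq]
  gcongr

theorem summable_exp_neg_mul_transverseEnergy {β ℓ : ℝ} (hβ : 0 < β) (hℓ : ℓ ≠ 0) :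
    Summable fun n => exp (-β * transverseEnergy ℓ n) := by
  have hc : -β * (π / ℓ) ^ 2 < 0 :=
    mul_neg_of_neg_of_pos (neg_neg_of_pos hβ) (by positivity)
  have hn (n : ℕ) : (n : ℝ) ≤ ((n : ℝ) + 1 / 2) ^ 2 := by nlinarith
  refine (summable_exp_nat_mul_of_ge hc hn).congr fun n => ?_
  rw [transverseEnergy_eq, mul_assoc]

section TransverseModes

variable {ℓ β μ : ℝ}

theorem lt_transverseEnergy (hμ : μ < transverseEnergy ℓ 0) (n : ℕ) : μ < transverseEnergy ℓ n :=
  hμ.trans_le (monotone_transverseEnergy ℓ n.zero_le)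

theorem boseOccupation_transverseEnergy_le (hβ : 0 < β) (hμ : μ < transverseEnergy ℓ 0)
    (n : ℕ) (x : ℝ) :
    boseOccupation β μ (transverseEnergy ℓ n) x ≤
      (1 - exp (-(β * (transverseEnergy ℓ 0 - μ))))⁻¹ * exp (β * μ) *
        exp (-β * transverseEnergy ℓ n) * exp (-β * x ^ 2) :=
  boseOccupation_le hβ hμ (monotone_transverseEnergy ℓ n.zero_le) x

theorem summable_boseOccupation_transverseEnergy (hℓ : ℓ ≠ 0) (hβ : 0 < β)
    (hμ : μ < transverseEnergy ℓ 0) (x : ℝ) :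
    Summable fun n => boseOccupation β μ (transverseEnergy ℓ n) x :=
  (((summable_exp_neg_mul_transverseEnergy hβ hℓ).mul_left _).mul_right _).of_nonneg_of_le
    (fun n => (boseOccupation_pos hβ (lt_transverseEnergy hμ n) x).le)
    (boseOccupation_transverseEnergy_le hβ hμ · x)

theorem summable_integral_boseOccupation_transverseEnergy (hℓ : ℓ ≠ 0) (hβ : 0 < β)
    (hμ : μ < transverseEnergy ℓ 0) :
    Summable fun n => ∫ x in Ioi 0, boseOccupation β μ (transverseEnergy ℓ n) x :=
  summable_integral_of_le_mul
    (fun n => (integrable_boseOccupation hβ (lt_transverseEnergy hμ n)).integrableOn)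
    (fun n x => (boseOccupation_pos hβ (lt_transverseEnergy hμ n) x).le)
    (boseOccupation_transverseEnergy_le hβ hμ)
    ((summable_exp_neg_mul_transverseEnergy hβ hℓ).mul_left _)
    (integrable_exp_neg_mul_sq hβ).integrableOn

end TransverseModes

/-- for `ℓ > 0`, `β > 0`, `μ < π²/(4ℓ²)` and `ε_n = ((n + 1/2)π/ℓ)²`,
the density of pairs in excited states converges in the thermodynamic limit:
`(1/L) Σ_n Σ_{m≥1} 1/(e^{β(ε_n + (mπ/L)² - μ)} - 1)
  → (1/π) Σ_n ∫₀^∞ 1/(e^{βε_n} e^{β(x² - μ)} - 1) dx` as `L → ∞`,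
and both sides are finite (the double sum is summable for each `L > 0` and the series
of integrals converges). The inner sum over `m ≥ 1` is encoded by `m + 1`, `m : ℕ`. -/
theorem excited_states_density_thermodynamic_limit
    (ℓ β μ : ℝ) (hℓ : 0 < ℓ) (hβ : 0 < β) (hμ : μ < π ^ 2 / (4 * ℓ ^ 2)) :
    (∀ L : ℝ, 0 < L → Summable (fun nm : ℕ × ℕ =>
      (Real.exp (β * ((((nm.1 : ℝ) + 1/2) * π / ℓ) ^ 2 +
        (((nm.2 : ℝ) + 1) * π / L) ^ 2 - μ)) - 1)⁻¹)) ∧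
    Summable (fun n : ℕ =>
      ∫ x in Set.Ioi (0:ℝ),
        (Real.exp (β * (((n : ℝ) + 1/2) * π / ℓ) ^ 2) *
          Real.exp (β * (x ^ 2 - μ)) - 1)⁻¹) ∧
    Filter.Tendsto
      (fun L : ℝ => (1 / L) *
        ∑' nm : ℕ × ℕ,
          (Real.exp (β * ((((nm.1 : ℝ) + 1/2) * π / ℓ) ^ 2 +
            (((nm.2 : ℝ) + 1) * π / L) ^ 2 - μ)) - 1)⁻¹)
      Filter.atTop
      (nhds ((1 / π) *
        ∑' n : ℕ,
          ∫ x in Set.Ioi (0:ℝ),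
            (Real.exp (β * (((n : ℝ) + 1/2) * π / ℓ) ^ 2) *
              Real.exp (β * (x ^ 2 - μ)) - 1)⁻¹)) := by
  rw [← transverseEnergy_zero] at hμ
  set f : ℕ → ℝ → ℝ := fun n => boseOccupation β μ (transverseEnergy ℓ n) with hf
  have anti (n : ℕ) := antitoneOn_boseOccupation hβ (lt_transverseEnergy hμ n)
  have integrable (n : ℕ) :=
    (integrable_boseOccupation hβ (lt_transverseEnergy hμ n)).integrableOn (s := Ioi 0)
  have nonneg (n : ℕ) : ∀ x ∈ Ioi 0, 0 ≤ f n x := fun x _ =>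
    (boseOccupation_pos hβ (lt_transverseEnergy hμ n) x).le
  have summable_integral := summable_integral_boseOccupation_transverseEnergy hℓ.ne' hβ hμ
  have term_eq (L : ℝ) (nm : ℕ × ℕ) :
      (exp (β * ((((nm.1 : ℝ) + 1/2) * π / ℓ) ^ 2 + (((nm.2 : ℝ) + 1) * π / L) ^ 2 - μ)) - 1)⁻¹
        = f nm.1 ((nm.2 + 1) * (π / L)) := by
    simp only [hf, boseOccupation, transverseEnergy, mul_div_assoc]
  have integrand_eq (n : ℕ) (x : ℝ) :
      (exp (β * (((n : ℝ) + 1/2) * π / ℓ) ^ 2) * exp (β * (x ^ 2 - μ)) - 1)⁻¹ = f n x := by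
    simp only [hf, boseOccupation, transverseEnergy, ← exp_add]
    ring_nf
  simp only [term_eq, integrand_eq]
  refine ⟨fun L hL => summable_prod_comp_add_one_mul anti integrable nonneg summable_integral
    (by positivity), summable_integral, ?_⟩
  have spacing : Tendsto (fun L => π / L) atTop (𝓝[>] 0) :=
    tendsto_nhdsWithin_iff.2 ⟨tendsto_const_nhds.div_atTop tendsto_id,
      (eventually_gt_atTop 0).mono fun L hL => div_pos pi_pos hL⟩
  refine (((tendsto_mul_tsum_prod_comp_add_one_mul anti integrable nonneg summable_integral
    (summable_boseOccupation_transverseEnergy hℓ.ne' hβ hμ 0)).comp spacing).const_mul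
      (1 / π)).congr' ?_
  filter_upwards [eventually_gt_atTop 0] with L hL
  rw [Function.comp_apply, ← mul_assoc]
  congr 1
  field_simp
end

section
/- Let β > 0, θ ∈ ℝ, N ∈ ℕ with N ≥ 1, C ≥ 0 and ρ > C. Let (L_j) be a sequence of positive reals with L_j → ∞, and for each j let E_j : ℕ → ℝ be a nondecreasing sequence and μ_j ∈ ℝ with μ_j < E_j(0), such that: (i) Σ_{n=0}^∞ 1/(e^{β(E_j(n) − μ_j)} − 1) = ρ·L_j for every j; (ii) the number of indices n with E_j(n) < θ is at most N for every j; and (iii) limsup_{j→∞} (1/L_j)·Σ_{n : E_j(n) ≥ θ} 1/(e^{β(E_j(n) − μ_j)} − 1) ≤ C. Then limsup_{j→∞} (1/L_j)·1/(e^{β(E_j(0) − μ_j)} − 1) ≥ (ρ − C)/N > 0; in particular the ground state occupation 1/(e^{β(E_j(0) − μ_j)} − 1) is macroscopic, i.e. limsup_{j→∞} 1/(e^{β(E_j(0) − μ_j)} − 1) = ∞. -/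
/-!
Split the total occupation `ρ L` into the levels below `θ` and the rest. There are at most `N`
levels below `θ`, each occupied at most as much as the ground state, so
`ρ L ≤ N n₀ + (excited occupation)`. Dividing by `L`, the excited density has limsup at most `C`,
hence the ground state density `n₀ / L` has limsup at least `(ρ - C) / N > 0`; since `L → ∞`,
`n₀` itself is unbounded along a subsequence.
-/

open Real Filter

section
variable {ι : Type*}

lemma tsum_le_card_mul_add_tsum_subtype {f : ι → ℝ} {s : Set ι} {t : Finset ι} {M : ℝ}
    (hf : Summable f) (hf0 : ∀ i, 0 ≤ f i) (hM : ∀ i, f i ≤ M) (hst : ∀ i ∉ s, i ∈ t) :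
    ∑' i, f i ≤ t.card * M + ∑' i : s, f i := by
  have hcompl : ∑' i : ↑sᶜ, f i ≤ ∑' i : t, f i :=
    (hf.subtype _).tsum_le_tsum_of_inj (Set.inclusion fun i hi => hst i hi)
      (Set.inclusion_injective _) (fun i _ => hf0 i) (fun _ => le_rfl) (hf.subtype _)
  calc ∑' i, f i = ∑' i : ↑sᶜ, f i + ∑' i : s, f i := by
        rw [add_comm, hf.tsum_subtype_add_tsum_subtype_compl]
    _ ≤ ∑ i ∈ t, f i + ∑' i : s, f i := by grw [hcompl, Finset.tsum_subtype]
    _ ≤ t.card * M + ∑' i : s, f i := by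
        grw [Finset.sum_le_card_nsmul t f M fun i _ => hM i, nsmul_eq_mul]

lemma le_limsup_of_le_mul_add {l : Filter ι} [l.NeBot] {u v : ι → ℝ} {a k C : ℝ}
    (hk : 0 < k) (h : ∀ i, a ≤ k * u i + v i) (hv : limsup (fun i => (v i : EReal)) l ≤ C) :
    (((a - C) / k : ℝ) : EReal) ≤ limsup (fun i => (u i : EReal)) l := by
  refine EReal.ge_of_forall_gt_iff_ge.1 fun z hz => ?_
  have hCz : C < a - k * z := by
    have := (lt_div_iff₀ hk).1 (EReal.coe_lt_coe_iff.1 hz)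
    linarith
  have hv_small : ∀ᶠ i in l, (v i : EReal) < (a - k * z : ℝ) :=
    eventually_lt_of_limsup_lt (hv.trans_lt (EReal.coe_lt_coe_iff.2 hCz))
  refine le_limsup_of_frequently_le (hv_small.mono fun i hi => ?_).frequently
  have hvi := EReal.coe_lt_coe_iff.1 hi
  have : k * z ≤ k * u i := by linarith [h i]
  exact EReal.coe_le_coe_iff.2 (le_of_mul_le_mul_left this hk)

lemma limsup_eq_top_of_limsup_div_pos {l : Filter ι} {u L : ι → ℝ}
    (hL : Tendsto L l atTop) (h : 0 < limsup (fun i => ((1 / L i * u i : ℝ) : EReal)) l) :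
    limsup (fun i => (u i : EReal)) l = ⊤ := by
  obtain ⟨δ, hδ₀, hδlt⟩ := EReal.lt_iff_exists_real_btwn.1 h
  have hδ : 0 < δ := EReal.coe_pos.1 hδ₀
  refine eq_top_iff.2 <| EReal.ge_of_forall_gt_iff_ge.1 fun M _ => le_limsup_of_frequently_le ?_
  refine ((frequently_lt_of_lt_limsup (by isBoundedDefault) hδlt).and_eventually
    ((hL.eventually_gt_atTop 0).and (hL.eventually_ge_atTop (M / δ)))).mono ?_
  rintro i ⟨hδi, hLi, hML⟩
  have hi : δ * L i < u i := by
    have := EReal.coe_lt_coe_iff.1 hδi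
    rwa [one_div_mul_eq_div, lt_div_iff₀ hLi] at this
  have : M ≤ δ * L i := by rwa [div_le_iff₀' hδ] at hML
  exact EReal.coe_le_coe_iff.2 (by linarith)

end

/-- `ε` is the energy of the level measured from the chemical potential. -/
noncomputable def boseEinsteinOccupation (β ε : ℝ) : ℝ := (exp (β * ε) - 1)⁻¹

lemma boseEinsteinOccupation_pos {β ε : ℝ} (hβ : 0 < β) (hε : 0 < ε) :
    0 < boseEinsteinOccupation β ε :=
  inv_pos.2 <| sub_pos.2 <| one_lt_exp_iff.2 (mul_pos hβ hε)

lemma boseEinsteinOccupation_anti {β ε ε' : ℝ} (hβ : 0 < β) (hε : 0 < ε) (h : ε ≤ ε') :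
    boseEinsteinOccupation β ε' ≤ boseEinsteinOccupation β ε := by
  unfold boseEinsteinOccupation
  gcongr
  exact sub_pos.2 <| one_lt_exp_iff.2 (mul_pos hβ hε)

lemma tsum_boseEinsteinOccupation_le {β μ θ : ℝ} {E : ℕ → ℝ} {N : ℕ} (hβ : 0 < β)
    (hE : Monotone E) (hμ : μ < E 0) (hsum : Summable fun n => boseEinsteinOccupation β (E n - μ))
    (hcount : ∀ n, E n < θ → n < N) :
    ∑' n, boseEinsteinOccupation β (E n - μ) ≤
      N * boseEinsteinOccupation β (E 0 - μ) +
        ∑' n : {n // θ ≤ E n}, boseEinsteinOccupation β (E n - μ) := by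
  have hgap : 0 < E 0 - μ := sub_pos.2 hμ
  have := tsum_le_card_mul_add_tsum_subtype (s := {n | θ ≤ E n}) (t := Finset.range N) hsum
    (fun n => (boseEinsteinOccupation_pos hβ (hgap.trans_le (by gcongr; exact hE n.zero_le))).le)
    (fun n => boseEinsteinOccupation_anti hβ hgap (by gcongr; exact hE n.zero_le))
    (fun n hn => Finset.mem_range.2 (hcount n (not_le.1 hn)))
  rwa [Finset.card_range] at this

theorem bose_einstein_condensation_pigeonhole_general
    (β θ : ℝ) (hβ : 0 < β) (N : ℕ) (hN : 1 ≤ N) (C ρ : ℝ) (hρ : C < ρ)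
    (L : ℕ → ℝ) (hLpos : ∀ j, 0 < L j) (hLtop : Filter.Tendsto L Filter.atTop Filter.atTop)
    (E : ℕ → ℕ → ℝ) (hE : ∀ j, Monotone (E j))
    (μ : ℕ → ℝ) (hμ : ∀ j, μ j < E j 0)
    (hsummable : ∀ j, Summable (fun n : ℕ => (Real.exp (β * (E j n - μ j)) - 1)⁻¹))
    (hdensity : ∀ j, ∑' n : ℕ, (Real.exp (β * (E j n - μ j)) - 1)⁻¹ = ρ * L j)
    (hcount : ∀ j, ∀ n : ℕ, E j n < θ → n < N)
    (hexcited : Filter.limsup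
      (fun j => (((1 / L j) *
        ∑' n : {n : ℕ // θ ≤ E j n}, (Real.exp (β * (E j n.1 - μ j)) - 1)⁻¹ : ℝ) : EReal))
      Filter.atTop ≤ (C : EReal)) :
    ((((ρ - C) / N : ℝ)) : EReal) ≤ Filter.limsup
      (fun j => (((1 / L j) * (Real.exp (β * (E j 0 - μ j)) - 1)⁻¹ : ℝ) : EReal))
      Filter.atTop ∧
    0 < (ρ - C) / N ∧
    Filter.limsup
      (fun j => (((Real.exp (β * (E j 0 - μ j)) - 1)⁻¹ : ℝ) : EReal))
      Filter.atTop = ⊤ := by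
  have hNpos : (0 : ℝ) < N := Nat.cast_pos.2 hN
  have hsplit (j : ℕ) : ρ ≤ N * (1 / L j * boseEinsteinOccupation β (E j 0 - μ j)) +
      1 / L j * ∑' n : {n // θ ≤ E j n}, boseEinsteinOccupation β (E j n - μ j) := by
    rw [mul_left_comm, ← mul_add, one_div_mul_eq_div, le_div_iff₀ (hLpos j), ← hdensity j]
    exact tsum_boseEinsteinOccupation_le hβ (hE j) (hμ j) (hsummable j) (hcount j)
  have hground := le_limsup_of_le_mul_add hNpos hsplit hexcited
  have hpos : 0 < (ρ - C) / N := div_pos (sub_pos.2 hρ) hNpos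
  exact ⟨hground, hpos,
    limsup_eq_top_of_limsup_div_pos hLtop ((EReal.coe_pos.2 hpos).trans_le hground)⟩

/-- the abstract pigeonhole argument for Bose–Einstein condensation.
Given inverse temperature `β > 0`, a threshold `θ` (the bottom of the essential
spectrum), a uniform bound `N ≥ 1` on the number of eigenvalues below `θ`, a bound
`C ≥ 0` on the limiting density of excited pairs, and a pair density `ρ > C`; given
box sizes `L j → ∞`, nondecreasing eigenvalue sequences `E j`, and chemical potentials
`μ j < E j 0` such that the total occupation equals `ρ L j` (i), at most `N`
eigenvalues lie below `θ` (ii), and the limsup of the excited density is at most `C`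
(iii); then the ground state occupation density has limsup at least `(ρ - C)/N > 0`,
and in particular the ground state occupation itself has limsup `∞`
(macroscopic occupation). -/
theorem bose_einstein_condensation_pigeonhole
    (β θ : ℝ) (hβ : 0 < β) (N : ℕ) (hN : 1 ≤ N) (C ρ : ℝ) (hC : 0 ≤ C) (hρ : C < ρ)
    (L : ℕ → ℝ) (hLpos : ∀ j, 0 < L j) (hLtop : Filter.Tendsto L Filter.atTop Filter.atTop)
    (E : ℕ → ℕ → ℝ) (hE : ∀ j, Monotone (E j))
    (μ : ℕ → ℝ) (hμ : ∀ j, μ j < E j 0)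
    (hsummable : ∀ j, Summable (fun n : ℕ => (Real.exp (β * (E j n - μ j)) - 1)⁻¹))
    (hdensity : ∀ j, ∑' n : ℕ, (Real.exp (β * (E j n - μ j)) - 1)⁻¹ = ρ * L j)
    (hcount : ∀ j, ∀ n : ℕ, E j n < θ → n < N)
    (hexcited : Filter.limsup
      (fun j => (((1 / L j) *
        ∑' n : {n : ℕ // θ ≤ E j n}, (Real.exp (β * (E j n.1 - μ j)) - 1)⁻¹ : ℝ) : EReal))
      Filter.atTop ≤ (C : EReal)) :
    ((((ρ - C) / N : ℝ)) : EReal) ≤ Filter.limsup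
      (fun j => (((1 / L j) * (Real.exp (β * (E j 0 - μ j)) - 1)⁻¹ : ℝ) : EReal))
      Filter.atTop ∧
    0 < (ρ - C) / N ∧
    Filter.limsup
      (fun j => (((Real.exp (β * (E j 0 - μ j)) - 1)⁻¹ : ℝ) : EReal))
      Filter.atTop = ⊤ :=
  bose_einstein_condensation_pigeonhole_general β θ hβ N hN C ρ hρ L hLpos hLtop E hE μ hμ hsummable
    hdensity hcount hexcited
end
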